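/- arXiv:math/0506297 — 6 statements merged into one kernel-verified Lean document; each statement's English description precedes it below -/
import Mathlib

section
/- For R > 0 and a complex number z, (2/π) ∫_{D(R)} log|1 - z/w| dm₂(w) equals |z|² if |z| < R, and equals R² + 2R² log(|z|/R) if |z| ≥ R. -/
/-!
On the circle `‖w‖ = r > 0` we have `log ‖1 - z / w‖ = log ‖w - z‖ - log r` (except at `w = z`),
and by Jensen's formula the circle average of `log ‖· - z‖` is `log r + log⁺ (‖z‖ / r)`. Since
`log ‖1 - z / ·‖` is integrable on discs (in polar coordinates `log ‖w‖` becomes the bounded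
function `r log r`), Fubini in polar coordinates turns the disc integral into
`2π ∫₀ᴿ r log⁺ (‖z‖ / r) dr = 2π ∫₀^{min ‖z‖ R} r log (‖z‖ / r) dr`, which is elementary.
-/

open MeasureTheory Metric Real Set Filter

namespace Complex

variable {E : Type*} [NormedAddCommGroup E] [NormedSpace ℝ E]

lemma continuous_polarCoord_symm : Continuous Complex.polarCoord.symm := by
  simp only [funext Complex.polarCoord_symm_apply]
  fun_prop

lemma polarCoord_target_inter_preimage_ball (R : ℝ) :
    polarCoord.target ∩ Complex.polarCoord.symm ⁻¹' ball 0 R = Ioo 0 R ×ˢ Ioo (-π) π := by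
  ext ⟨r, θ⟩
  simp only [mem_inter_iff, mem_prod, mem_preimage, mem_ball_zero_iff,
    norm_polarCoord_symm, mem_Ioo]
  constructor
  · rintro ⟨⟨hr, hθ⟩, hrR⟩
    exact ⟨⟨hr, (abs_of_pos hr).symm.trans_lt hrR⟩, hθ⟩
  · rintro ⟨⟨hr, hrR⟩, hθ⟩
    exact ⟨⟨hr, hθ⟩, (abs_of_pos hr).trans_lt hrR⟩

lemma smul_indicator_polarCoord_symm (f : ℂ → E) (s : Set ℂ) :
    (fun p : ℝ × ℝ ↦ p.1 • s.indicator f (Complex.polarCoord.symm p)) =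
      (Complex.polarCoord.symm ⁻¹' s).indicator
        (fun p ↦ p.1 • f (Complex.polarCoord.symm p)) := by
  ext p
  rw [← indicator_comp_right, indicator_smul_apply]
  rfl

theorem integrable_iff_integrableOn_polarCoord_symm (f : ℂ → E) :
    Integrable f ↔
      IntegrableOn (fun p : ℝ × ℝ ↦ p.1 • f (Complex.polarCoord.symm p)) polarCoord.target := by
  rw [← (volume_preserving_equiv_real_prod.symm).integrable_comp_emb
    measurableEquivRealProd.symm.measurableEmbedding, ← integrableOn_univ,
    integrableOn_congr_set_ae polarCoord_source_ae_eq_univ.symm,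
    ← polarCoord.symm_image_target_eq_source,
    integrableOn_image_iff_integrableOn_abs_det_fderiv_smul volume
      polarCoord.open_target.measurableSet
      (fun p _ ↦ (hasFDerivAt_polarCoord_symm p).hasFDerivWithinAt) polarCoord.symm.injOn]
  refine integrableOn_congr_fun (fun p hp ↦ ?_) polarCoord.open_target.measurableSet
  rw [det_fderivPolarCoordSymm, abs_of_pos hp.1]
  rfl

theorem integrableOn_ball_iff_integrableOn_polarCoord_symm (f : ℂ → E) (R : ℝ) :
    IntegrableOn f (ball 0 R) ↔
      IntegrableOn (fun p : ℝ × ℝ ↦ p.1 • f (Complex.polarCoord.symm p))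
        (Ioo 0 R ×ˢ Ioo (-π) π) := by
  rw [← integrable_indicator_iff measurableSet_ball, integrable_iff_integrableOn_polarCoord_symm,
    smul_indicator_polarCoord_symm,
    integrableOn_indicator_iff (continuous_polarCoord_symm.measurable measurableSet_ball),
    inter_comm, polarCoord_target_inter_preimage_ball]

theorem setIntegral_ball_eq_setIntegral_polarCoord_symm (f : ℂ → E) (R : ℝ) :
    ∫ w in ball 0 R, f w =
      ∫ p in Ioo 0 R ×ˢ Ioo (-π) π, p.1 • f (Complex.polarCoord.symm p) := by
  rw [← integral_indicator measurableSet_ball, ← Complex.integral_comp_polarCoord_symm,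
    smul_indicator_polarCoord_symm,
    setIntegral_indicator (continuous_polarCoord_symm.measurable measurableSet_ball),
    polarCoord_target_inter_preimage_ball]

lemma polarCoord_symm_eq_circleMap (r θ : ℝ) :
    Complex.polarCoord.symm (r, θ) = circleMap 0 r θ := by
  simp [circleMap, exp_mul_I, mul_comm (sin θ : ℂ)]

theorem setIntegral_Ioo_polarCoord_symm_eq_circleAverage [CompleteSpace E] (f : ℂ → E) (r : ℝ) :
    ∫ θ in Ioo (-π) π, f (Complex.polarCoord.symm (r, θ)) = (2 * π) • circleAverage f 0 r := by
  rw [circleAverage_eq_integral_add (-π), smul_inv_smul₀ (by positivity),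
    intervalIntegral.integral_comp_add_right (fun θ ↦ f (circleMap 0 r θ)),
    intervalIntegral.integral_of_le (by linarith [pi_pos]), ← integral_Ioc_eq_integral_Ioo]
  simp only [polarCoord_symm_eq_circleMap, zero_add, two_mul, add_neg_cancel_right]

theorem setIntegral_ball_eq_integral_circleAverage [CompleteSpace E] {f : ℂ → E} {R : ℝ}
    (hR : 0 ≤ R) (hf : IntegrableOn f (ball 0 R)) :
    ∫ w in ball 0 R, f w = ∫ r in 0..R, (2 * π * r) • circleAverage f 0 r := by
  have hpolar := (integrableOn_ball_iff_integrableOn_polarCoord_symm f R).1 hf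
  rw [IntegrableOn, Measure.volume_eq_prod, ← Measure.prod_restrict] at hpolar
  rw [setIntegral_ball_eq_setIntegral_polarCoord_symm, Measure.volume_eq_prod,
    ← Measure.prod_restrict, integral_prod _ hpolar, intervalIntegral.integral_of_le hR,
    integral_Ioc_eq_integral_Ioo]
  refine setIntegral_congr_fun measurableSet_Ioo fun r _ ↦ ?_
  rw [integral_smul, setIntegral_Ioo_polarCoord_symm_eq_circleAverage, smul_smul, mul_comm r]

end Complex

lemma log_norm_one_sub_div {z w : ℂ} (hw : w ≠ 0) (hwz : w ≠ z) :
    log ‖1 - z / w‖ = log ‖w - z‖ - log ‖w‖ := by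
  rw [one_sub_div hw, norm_div, log_div (by simpa [sub_eq_zero] using hwz) (by simpa using hw)]

theorem integrableOn_log_norm_ball (R : ℝ) : IntegrableOn (fun w : ℂ ↦ log ‖w‖) (ball 0 R) := by
  rw [Complex.integrableOn_ball_iff_integrableOn_polarCoord_symm]
  simp only [Complex.norm_polarCoord_symm, log_abs, smul_eq_mul]
  exact ((continuous_mul_log.comp continuous_fst).continuousOn.integrableOn_compact
    (isCompact_Icc.prod isCompact_Icc)).mono_set (prod_mono Ioo_subset_Icc_self Ioo_subset_Icc_self)

theorem integrableOn_log_norm_sub_ball (c : ℂ) (R : ℝ) :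
    IntegrableOn (fun w : ℂ ↦ log ‖w - c‖) (ball c R) := by
  have := (measurePreserving_sub_right volume c).integrableOn_comp_preimage
    (measurableEmbedding_subRight c) (f := fun w : ℂ ↦ log ‖w‖) (s := ball 0 R)
  have hpre : (· - c) ⁻¹' ball 0 R = ball c R := by ext w; simp [dist_eq_norm]
  rw [hpre] at this
  exact this.2 (integrableOn_log_norm_ball R)

theorem integrableOn_log_norm_one_sub_div (z : ℂ) (R : ℝ) :
    IntegrableOn (fun w : ℂ ↦ log ‖1 - z / w‖) (ball 0 R) := by
  have hsub : ball (0 : ℂ) R ⊆ ball z (R + ‖z‖) := ball_subset_ball' (by rw [dist_zero_left])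
  refine (((integrableOn_log_norm_sub_ball z _).mono_set hsub).sub
    (integrableOn_log_norm_ball R)).congr_fun_ae ?_
  filter_upwards [ae_restrict_of_ae <|
    measure_eq_zero_iff_ae_notMem.1 ((toFinite {0, z}).measure_zero volume)] with w hw
  simp only [mem_insert_iff, mem_singleton_iff, not_or] at hw
  exact (log_norm_one_sub_div hw.1 hw.2).symm

theorem circleAverage_log_norm_one_sub_div (z : ℂ) {r : ℝ} (hr : 0 < r) :
    circleAverage (fun w ↦ log ‖1 - z / w‖) 0 r = log⁺ (‖z‖ / r) := by
  calc circleAverage (fun w ↦ log ‖1 - z / w‖) 0 r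
      = circleAverage (fun w ↦ log ‖w - z‖ - log r) 0 r := by
        refine circleAverage_congr_codiscreteWithin ?_ hr.ne'
        filter_upwards [compl_singleton_mem_codiscreteWithin z, self_mem_codiscreteWithin _]
          with w hwz hw
        rw [mem_sphere_zero_iff_norm, abs_of_pos hr] at hw
        rw [log_norm_one_sub_div (norm_pos_iff.1 (hw ▸ hr)) hwz, hw]
    _ = circleAverage (log ‖· - z‖) 0 r - log r := by
        rw [circleAverage_fun_sub (circleIntegrable_log_norm_sub_const r)
          (circleIntegrable_const _ 0 r), circleAverage_const]
    _ = log⁺ (‖z‖ / r) := by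
        rw [circleAverage_log_norm_sub_const_eq_log_radius_add_posLog hr.ne', zero_sub, norm_neg,
          inv_mul_eq_div, add_sub_cancel_left]

theorem integral_mul_log {m : ℝ} (hm : 0 ≤ m) :
    ∫ r in 0..m, r * log r = m ^ 2 / 2 * log m - m ^ 2 / 4 := by
  have hderiv : ∀ r ∈ Ioo 0 m, HasDerivAt (fun r ↦ r * (r * log r) / 2 - r ^ 2 / 4) (r * log r) r :=
    fun r hr ↦ (((hasDerivAt_id r).mul (hasDerivAt_mul_log hr.1.ne')).div_const 2 |>.sub
      ((hasDerivAt_pow 2 r).div_const 4)).congr_deriv (by simp; ring)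
  rw [intervalIntegral.integral_eq_sub_of_hasDerivAt_of_le hm (by fun_prop) hderiv
    (continuous_mul_log.intervalIntegrable _ _)]
  ring

lemma mul_log_div_eq {ρ : ℝ} (hρ : ρ ≠ 0) (r : ℝ) : r * log (ρ / r) = r * log ρ - r * log r := by
  rcases eq_or_ne r 0 with rfl | hr
  · simp
  · rw [log_div hρ hr, mul_sub]

theorem integral_mul_log_div {ρ m : ℝ} (hρ : ρ ≠ 0) (hm : 0 ≤ m) :
    ∫ r in 0..m, r * log (ρ / r) = m ^ 2 / 4 + m ^ 2 / 2 * log (ρ / m) := by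
  rcases hm.eq_or_lt with rfl | hm
  · simp
  simp_rw [mul_log_div_eq hρ]
  rw [intervalIntegral.integral_sub ((continuous_mul_const _).intervalIntegrable _ _)
      (continuous_mul_log.intervalIntegrable _ _),
    intervalIntegral.integral_mul_const, integral_id, integral_mul_log hm.le, log_div hρ hm.ne']
  ring

lemma posLog_div_of_le {ρ r : ℝ} (hr : 0 < r) (h : r ≤ ρ) : log⁺ (ρ / r) = log (ρ / r) :=
  posLog_eq_log (by rw [abs_of_pos (div_pos (hr.trans_le h) hr)]; exact (one_le_div hr).2 h)

lemma posLog_div_of_ge {ρ r : ℝ} (hρ : 0 ≤ ρ) (h : ρ ≤ r) : log⁺ (ρ / r) = 0 :=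
  (posLog_eq_zero_iff _).2 <|
    abs_le.2 ⟨by linarith [div_nonneg hρ (hρ.trans h)], div_le_one_of_le₀ h (hρ.trans h)⟩

lemma eqOn_mul_posLog_div_mul_log_div {ρ R : ℝ} (hR : 0 ≤ R) (hRρ : R ≤ ρ) :
    EqOn (fun r ↦ r * log⁺ (ρ / r)) (fun r ↦ r * log (ρ / r)) (uIcc 0 R) := by
  intro r hr
  rw [uIcc_of_le hR] at hr
  rcases hr.1.eq_or_lt with rfl | hr0
  · simp
  · simp only [posLog_div_of_le hr0 (hr.2.trans hRρ)]

theorem integral_mul_posLog_div_of_le {ρ R : ℝ} (hR : 0 ≤ R) (hRρ : R ≤ ρ) :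
    ∫ r in 0..R, r * log⁺ (ρ / r) = ∫ r in 0..R, r * log (ρ / r) :=
  intervalIntegral.integral_congr (eqOn_mul_posLog_div_mul_log_div hR hRρ)

theorem integral_mul_posLog_div_of_ge {ρ R : ℝ} (hρ : 0 ≤ ρ) (hρR : ρ ≤ R) :
    ∫ r in 0..R, r * log⁺ (ρ / r) = ∫ r in 0..ρ, r * log (ρ / r) := by
  rcases hρ.eq_or_lt with rfl | hρ
  · simp
  have hlog := eqOn_mul_posLog_div_mul_log_div hρ.le le_rfl
  have hzero : EqOn (fun r ↦ r * log⁺ (ρ / r)) 0 (uIcc ρ R) := by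
    intro r hr
    rw [uIcc_of_le hρR] at hr
    simp [posLog_div_of_ge hρ.le hr.1]
  have hcont : Continuous fun r ↦ r * log (ρ / r) := by
    simp_rw [mul_log_div_eq hρ.ne']
    fun_prop
  rw [← intervalIntegral.integral_add_adjacent_intervals
      ((intervalIntegrable_congr (hlog.mono uIoc_subset_uIcc)).2 (hcont.intervalIntegrable _ _))
      ((intervalIntegrable_congr (hzero.mono uIoc_subset_uIcc)).2 intervalIntegrable_const),
    intervalIntegral.integral_congr hlog, intervalIntegral.integral_congr hzero]
  simp

theorem setIntegral_ball_log_norm_one_sub_div {R : ℝ} (hR : 0 ≤ R) (z : ℂ) :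
    ∫ w in ball 0 R, log ‖1 - z / w‖ = 2 * π * ∫ r in 0..R, r * log⁺ (‖z‖ / r) := by
  rw [Complex.setIntegral_ball_eq_integral_circleAverage hR
    (integrableOn_log_norm_one_sub_div z R), ← intervalIntegral.integral_const_mul]
  refine intervalIntegral.integral_congr fun r hr ↦ ?_
  rw [uIcc_of_le hR] at hr
  rcases hr.1.eq_or_lt with rfl | hr0
  · simp
  · simp only [circleAverage_log_norm_one_sub_div z hr0, smul_eq_mul]
    ring

theorem stmt_3 (R : ℝ) (hR : 0 < R) (z : ℂ) :
    (‖z‖ < R →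
      (2 / Real.pi) * (∫ w in Metric.ball (0:ℂ) R, Real.log (‖1 - z / w‖))
        = ‖z‖ ^ 2) ∧
    (R ≤ ‖z‖ →
      (2 / Real.pi) * (∫ w in Metric.ball (0:ℂ) R, Real.log (‖1 - z / w‖))
        = R ^ 2 + 2 * R ^ 2 * Real.log (‖z‖ / R)) := by
  rw [setIntegral_ball_log_norm_one_sub_div hR.le z]
  refine ⟨fun hz ↦ ?_, fun hz ↦ ?_⟩
  · rw [integral_mul_posLog_div_of_ge (norm_nonneg z) hz.le]
    rcases eq_or_ne ‖z‖ 0 with hz0 | hz0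
    · simp [hz0]
    rw [integral_mul_log_div hz0 (norm_nonneg z), div_self hz0, log_one]
    field_simp
    ring
  · rw [integral_mul_posLog_div_of_le hR.le hz, integral_mul_log_div (hR.trans_le hz).ne' hR.le]
    field_simp
    ring
end

section
/- Let F(z) = ∑_{n≥0} c_n zⁿ be entire with |F(z)| ≤ exp(|z|²) for all z, let N ∈ ℕ, and set T_N F(z) = ∑_{0≤n≤N} c_n zⁿ. Then |F(z) − T_N F(z)| ≤ 2^{−(N−3)/2} for all |z| ≤ √(N/(4e)). -/
/-!
By Cauchy's estimate on the circle of radius `R = √(n/2)`, the growth bound gives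
`|c_n| ≤ exp(n/2) (2/n)^{n/2}`. For `n > N` and `|z|² ≤ N/(4e) ≤ n/(4e)` this makes the `n`-th
Taylor term at most `2^{-n/2}`, and the geometric tail `∑_{n > N} 2^{-n/2}` is at most
`(2 + √2) 2^{-(N+1)/2} ≤ 2^{-(N-3)/2}`.
-/

open Real Finset Metric
open scoped Nat

theorem norm_sub_sum_range_le_of_norm_le_pow {E : Type*} [NormedAddCommGroup E] {g : ℕ → E}
    {s : E} (hg : HasSum g s) {r : ℝ} (hr₀ : 0 ≤ r) (hr₁ : r < 1) {m : ℕ}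
    (hgr : ∀ n, m ≤ n → ‖g n‖ ≤ r ^ n) :
    ‖s - ∑ i ∈ range m, g i‖ ≤ r ^ m / (1 - r) := by
  have htail : HasSum (fun i ↦ g (i + m)) (s - ∑ i ∈ range m, g i) :=
    (hasSum_nat_add_iff' m).mpr hg
  have hgeom : HasSum (fun i ↦ r ^ m * r ^ i) (r ^ m * (1 - r)⁻¹) :=
    (hasSum_geometric_of_lt_one hr₀ hr₁).mul_left _
  refine htail.norm_le_of_bounded hgeom fun i ↦ ?_
  simpa [pow_add, mul_comm] using hgr (i + m) (Nat.le_add_left m i)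

theorem norm_iteratedDeriv_div_factorial_mul_pow_le {f : ℂ → ℂ} (hf : Differentiable ℂ f)
    {R C : ℝ} (hR : 0 < R) (hC : ∀ w ∈ sphere (0 : ℂ) R, ‖f w‖ ≤ C) (n : ℕ) (z : ℂ) :
    ‖iteratedDeriv n f 0 / (n ! : ℂ) * z ^ n‖ ≤ C * (‖z‖ / R) ^ n := by
  have hcauchy := Complex.norm_iteratedDeriv_le_of_forall_mem_sphere_norm_le n hR
    hf.diffContOnCl hC
  have hcoeff : ‖iteratedDeriv n f 0‖ / n ! ≤ C / R ^ n := by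
    rwa [div_le_iff₀ (by positivity), div_mul_eq_mul_div, mul_comm]
  calc ‖iteratedDeriv n f 0 / (n ! : ℂ) * z ^ n‖ = ‖iteratedDeriv n f 0‖ / n ! * ‖z‖ ^ n := by
        rw [norm_mul, norm_div, norm_pow, Complex.norm_natCast]
    _ ≤ C / R ^ n * ‖z‖ ^ n := by gcongr
    _ = C * (‖z‖ / R) ^ n := by ring

theorem norm_iteratedDeriv_div_factorial_mul_pow_le_of_norm_le_exp_sq {f : ℂ → ℂ} (hf : Differentiable ℂ f)
    (hbd : ∀ z : ℂ, ‖f z‖ ≤ exp (‖z‖ ^ 2)) {n : ℕ} (hn : 0 < n) {z : ℂ}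
    (hz : 4 * exp 1 * ‖z‖ ^ 2 ≤ n) :
    ‖iteratedDeriv n f 0 / (n ! : ℂ) * z ^ n‖ ≤ (√2)⁻¹ ^ n := by
  set R := √(n / 2 : ℝ)
  have hR : 0 < R := sqrt_pos.mpr (by positivity)
  have hR2 : R ^ 2 = n / 2 := sq_sqrt (by positivity)
  have hC : ∀ w ∈ sphere (0 : ℂ) R, ‖f w‖ ≤ exp (1 / 2) ^ n := fun w hw ↦ by
    have := hbd w
    rw [mem_sphere_zero_iff_norm.mp hw, hR2] at this
    rwa [← exp_nat_mul, ← div_eq_mul_one_div]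
  have hratio : exp (1 / 2) * (‖z‖ / R) ≤ (√2)⁻¹ := by
    rw [← sqrt_inv, le_sqrt (by positivity) (by norm_num), mul_pow, div_pow, hR2, ← exp_nat_mul]
    rw [show ((2 : ℕ) : ℝ) * (1 / 2) = 1 by norm_num, div_div_eq_mul_div, ← mul_div_assoc,
      div_le_iff₀ (by positivity)]
    nlinarith
  calc ‖iteratedDeriv n f 0 / (n ! : ℂ) * z ^ n‖ ≤ exp (1 / 2) ^ n * (‖z‖ / R) ^ n :=
        norm_iteratedDeriv_div_factorial_mul_pow_le hf hR hC n z
    _ ≤ (√2)⁻¹ ^ n := by rw [← mul_pow]; gcongr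

theorem inv_sqrt_two_pow_div_le (N : ℕ) :
    (√2)⁻¹ ^ (N + 1) / (1 - (√2)⁻¹) ≤ (2 : ℝ) ^ (-(((N : ℝ) - 3) / 2)) := by
  have hpow : (√2)⁻¹ ^ (N + 1) = (2 : ℝ) ^ (-(((N : ℝ) + 1) / 2)) := by
    rw [sqrt_eq_rpow, ← rpow_neg zero_le_two, ← rpow_natCast, ← rpow_mul zero_le_two]
    push_cast
    ring_nf
  have hshift : (2 : ℝ) ^ (-(((N : ℝ) - 3) / 2)) = (2 : ℝ) ^ (-(((N : ℝ) + 1) / 2)) * 4 := by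
    rw [show -(((N : ℝ) - 3) / 2) = -(((N : ℝ) + 1) / 2) + 2 by ring, rpow_add zero_lt_two]
    norm_num
  have hsqrt : (4 : ℝ) / 3 ≤ √2 := by
    rw [le_sqrt (by norm_num) zero_le_two]; norm_num
  have hinv : (√2)⁻¹ ≤ 3 / 4 := by
    rw [inv_le_comm₀ (by positivity) (by norm_num)]; linarith
  rw [hpow, hshift, div_le_iff₀ (by linarith)]
  nlinarith [rpow_pos_of_pos zero_lt_two (-(((N : ℝ) + 1) / 2))]

theorem stmt_8 (F : ℂ → ℂ) (hF : Differentiable ℂ F)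
    (hbd : ∀ z : ℂ, ‖F z‖ ≤ Real.exp (‖z‖ ^ 2)) (N : ℕ) (z : ℂ)
    (hz : ‖z‖ ≤ Real.sqrt ((N : ℝ) / (4 * Real.exp 1))) :
    ‖F z - ∑ n ∈ Finset.range (N + 1), (iteratedDeriv n F 0 / (Nat.factorial n : ℂ)) * z ^ n‖
      ≤ (2 : ℝ) ^ (-(((N : ℝ) - 3) / 2)) := by
  have htaylor : HasSum (fun n ↦ iteratedDeriv n F 0 / (n ! : ℂ) * z ^ n) (F z) := by
    refine (Complex.hasSum_taylorSeries_of_entire hF 0 z).congr_fun fun n ↦ ?_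
    simp only [smul_eq_mul, sub_zero]
    ring
  have hz2 : 4 * exp 1 * ‖z‖ ^ 2 ≤ N := by
    rwa [← le_div_iff₀' (by positivity), ← le_sqrt (norm_nonneg z) (by positivity)]
  have hterm : ∀ n, N + 1 ≤ n → ‖iteratedDeriv n F 0 / (n ! : ℂ) * z ^ n‖ ≤ (√2)⁻¹ ^ n :=
    fun n hn ↦ norm_iteratedDeriv_div_factorial_mul_pow_le_of_norm_le_exp_sq hF hbd (by omega)
      (hz2.trans (by exact_mod_cast (by omega : N ≤ n)))
  have hr₁ : (√2)⁻¹ < 1 := inv_lt_one_of_one_lt₀ (by simp [lt_sqrt])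
  exact (norm_sub_sum_range_le_of_norm_le_pow htaylor (by positivity) hr₁ hterm).trans
    (inv_sqrt_two_pow_div_le N)
end

section
/- Let F(z) = ∑_{n≥0} c_n zⁿ be entire with |F(z)| ≤ exp(|z|²) for all z, let N ∈ ℕ, and T_N F(z) = ∑_{0≤n≤N} c_n zⁿ. Then |T_N F(z)| ≤ (N+1)·|z|^N·(2e/N)^{N/2} for all |z| > √(N/2) (N ≥ 1). -/
/-!
Cauchy's estimate on the circle of radius `r` gives `‖c_n‖ ≤ exp (r ^ 2) / r ^ n`. Taking the
single radius `r = √(N / 2)` for all `n ≤ N`, and using `‖z‖ / r ≥ 1`, each term `c_n zⁿ` is at most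
`exp (r ^ 2) (‖z‖ / r) ^ N = ‖z‖ ^ N (2e / N) ^ (N / 2)`; there are `N + 1` terms.
-/

open Real Finset

lemma norm_iteratedDeriv_div_factorial_le_of_norm_le {F : ℂ → ℂ} (hF : Differentiable ℂ F)
    {g : ℝ → ℝ} (hbd : ∀ z : ℂ, ‖F z‖ ≤ g ‖z‖) {r : ℝ} (hr : 0 < r) (n : ℕ) :
    ‖iteratedDeriv n F 0 / (n.factorial : ℂ)‖ ≤ g r / r ^ n := by
  have hcauchy := Complex.norm_iteratedDeriv_le_of_forall_mem_sphere_norm_le n hr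
    hF.diffContOnCl fun z hz ↦ (mem_sphere_zero_iff_norm.mp hz) ▸ hbd z
  rw [norm_div, Complex.norm_natCast, div_le_iff₀ (by positivity)]
  calc ‖iteratedDeriv n F 0‖ ≤ n.factorial * g r / r ^ n := hcauchy
    _ = g r / r ^ n * n.factorial := by ring

lemma norm_sum_range_mul_pow_le {𝕜 : Type*} [NormedDivisionRing 𝕜] {a : ℕ → 𝕜} {M r : ℝ}
    (hr : 0 < r) (ha : ∀ n, ‖a n‖ ≤ M / r ^ n) (N : ℕ) {w : 𝕜} (hrw : r ≤ ‖w‖) :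
    ‖∑ n ∈ range (N + 1), a n * w ^ n‖ ≤ (N + 1) * ‖w‖ ^ N * (M / r ^ N) := by
  have hM : 0 ≤ M := by simpa using (norm_nonneg _).trans (ha 0)
  have hterm : ∀ n ∈ range (N + 1), ‖a n * w ^ n‖ ≤ M * (‖w‖ / r) ^ N := by
    intro n hn
    have hnN : n ≤ N := Nat.lt_succ_iff.mp (mem_range.mp hn)
    have hone : 1 ≤ ‖w‖ / r := (one_le_div hr).mpr hrw
    calc ‖a n * w ^ n‖ = ‖a n‖ * ‖w‖ ^ n := by rw [norm_mul, norm_pow]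
      _ ≤ M / r ^ n * ‖w‖ ^ n := by gcongr; exact ha n
      _ = M * (‖w‖ / r) ^ n := by rw [div_pow]; ring
      _ ≤ M * (‖w‖ / r) ^ N := by gcongr
  calc ‖∑ n ∈ range (N + 1), a n * w ^ n‖ ≤ ∑ n ∈ range (N + 1), ‖a n * w ^ n‖ :=
        norm_sum_le _ _
    _ ≤ ∑ _n ∈ range (N + 1), M * (‖w‖ / r) ^ N := sum_le_sum hterm
    _ = (N + 1) * ‖w‖ ^ N * (M / r ^ N) := by
        rw [sum_const, card_range, nsmul_eq_mul, div_pow]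
        push_cast
        ring

lemma sqrt_pow_eq_rpow {x : ℝ} (hx : 0 ≤ x) (n : ℕ) : √x ^ n = x ^ ((n : ℝ) / 2) := by
  rw [sqrt_eq_rpow, ← rpow_natCast, ← rpow_mul hx]
  ring_nf

lemma exp_div_rpow_self {t : ℝ} (ht : 0 ≤ t) : exp t / t ^ t = (exp 1 / t) ^ t := by
  rw [div_rpow (exp_pos 1).le ht, exp_one_rpow]

theorem stmt_9 (F : ℂ → ℂ) (hF : Differentiable ℂ F)
    (hbd : ∀ z : ℂ, ‖F z‖ ≤ Real.exp (‖z‖ ^ 2)) (N : ℕ) (hN : 1 ≤ N)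
    (z : ℂ) (hz : Real.sqrt ((N : ℝ) / 2) < ‖z‖) :
    ‖∑ n ∈ Finset.range (N + 1), (iteratedDeriv n F 0 / (Nat.factorial n : ℂ)) * z ^ n‖
      ≤ ((N : ℝ) + 1) * ‖z‖ ^ N * (2 * Real.exp 1 / (N : ℝ)) ^ ((N : ℝ) / 2) := by
  have hN0 : (0 : ℝ) < N := by exact_mod_cast hN
  have hr : 0 < √((N : ℝ) / 2) := by positivity
  have hcoeff := norm_iteratedDeriv_div_factorial_le_of_norm_le hF (g := fun r ↦ exp (r ^ 2))
    hbd hr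
  convert norm_sum_range_mul_pow_le hr hcoeff N hz.le using 2
  rw [sq_sqrt (by positivity), sqrt_pow_eq_rpow (by positivity), exp_div_rpow_self (by positivity)]
  congr 1
  field_simp
end

section
/- Suppose 0 < q and F is an entire function with F(0) ≠ 0, |F(z)| ≤ C·exp(|z|²/4) for all z, and F vanishes on a set Γ* ⊂ ℂ \ {0} with counting function n(r) = card(Γ* ∩ closed disc of radius r) satisfying n(r) ≥ q r² for all r ≥ C₀, for some constants C, C₀ > 0. If q > 1/2, then F ≡ 0, a contradiction; hence no such nonzero F exists. -/
/-!
Jensen's formula on the circle of radius `R` bounds `log ‖F 0‖ + ∑ log (R / ‖a‖)`, the sum over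
any finite set of zeros in the closed disc, by `log (max C 1) + R ^ 2 / 4`. Writing
`log (R / ‖a‖) = ∫_{‖a‖}^R ds / s` turns the sum into `∫ n(s) / s ds ≥ ∫_{C₀}^R q s ds`, which is
`q (R ^ 2 - C₀ ^ 2) / 2`. As `q / 2 > 1 / 4`, the two bounds are incompatible for large `R`.
-/

open Metric MeromorphicOn MeasureTheory Set Finset Real Filter

theorem AnalyticOnNhd.one_le_divisor {𝕜 E : Type*} [NontriviallyNormedField 𝕜]
    [NormedAddCommGroup E] [NormedSpace 𝕜 E] {f : 𝕜 → E} {U : Set 𝕜}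
    (hf : AnalyticOnNhd 𝕜 f U) (hU : IsPreconnected U) {c a : 𝕜} (hc : c ∈ U) (hfc : f c ≠ 0)
    (ha : a ∈ U) (hfa : f a = 0) : 1 ≤ divisor f U a := by
  have h_top : analyticOrderAt f a ≠ ⊤ := fun h =>
    hfc (hf.eqOn_zero_of_preconnected_of_eventuallyEq_zero hU ha (analyticOrderAt_eq_top.mp h) hc)
  have h_zero : analyticOrderAt f a ≠ 0 := (hf a ha).analyticOrderAt_ne_zero.mpr hfa
  obtain ⟨n, hn⟩ := ENat.ne_top_iff_exists.mp h_top
  rw [← hn] at h_zero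
  rw [hf.divisor_apply ha, ← hn, ENat.map_natCast, WithTop.untop₀_coe, Nat.one_le_cast]
  exact Nat.one_le_iff_ne_zero.mpr (by exact_mod_cast h_zero)

theorem AnalyticOnNhd.log_norm_add_sum_log_le {f : ℂ → ℂ} {c : ℂ} {R M : ℝ} (hR : 0 < R)
    (hf : AnalyticOnNhd ℂ f (closedBall c R)) (hfc : f c ≠ 0) (hM : 1 ≤ M)
    (hbd : ∀ z ∈ sphere c R, ‖f z‖ ≤ M) {S : Finset ℂ} (hS : ↑S ⊆ closedBall c R)
    (hfS : ∀ a ∈ S, f a = 0) :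
    Real.log ‖f c‖ + ∑ a ∈ S, Real.log (R / ‖c - a‖) ≤ Real.log M := by
  -- `1 ≤ M` also bounds `Real.log ‖f z‖ = 0` at the zeros of `f` on the circle.
  have hRabs : |R| = R := abs_of_pos hR
  set D := divisor f (closedBall c R)
  have jensen := AnalyticOnNhd.circleAverage_log_norm hR.ne' (hRabs.symm ▸ hf) hfc
  rw [hRabs] at jensen
  have average_le : circleAverage (Real.log ‖f ·‖) c R ≤ Real.log M := by
    refine circleAverage_mono_on_of_le_circle ?_ fun z hz => ?_
    · refine circleIntegrable_log_norm (hf.mono ?_).meromorphicOn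
      simpa only [hRabs] using sphere_subset_closedBall
    · rcases eq_or_ne (f z) 0 with h | h
      · simpa [h] using log_nonneg hM
      · exact log_le_log (norm_pos_iff.mpr h) (hbd z (hRabs ▸ hz))
  have log_nonneg_of_mem {u : ℂ} (hu : u ∈ closedBall c R) :
      0 ≤ Real.log (R * ‖c - u‖⁻¹) := by
    rcases (norm_nonneg (c - u)).eq_or_lt with h | h
    · simp [← h]
    · rw [mem_closedBall, dist_eq_norm'] at hu
      exact log_nonneg ((one_le_div h).mpr hu)
  have term_nonneg (u : ℂ) : 0 ≤ (D u : ℝ) * Real.log (R * ‖c - u‖⁻¹) := by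
    by_cases hu : u ∈ closedBall c R
    · exact mul_nonneg (by exact_mod_cast hf.divisor_nonneg u) (log_nonneg_of_mem hu)
    · simp [D, hu]
  have hD_finite := D.finiteSupport (isCompact_closedBall c R)
  have sum_le : ∑ a ∈ S, Real.log (R / ‖c - a‖)
      ≤ ∑ᶠ u, (D u : ℝ) * Real.log (R * ‖c - u‖⁻¹) := calc
    _ ≤ ∑ a ∈ S, (D a : ℝ) * Real.log (R * ‖c - a‖⁻¹) := by
      refine Finset.sum_le_sum fun a ha => le_mul_of_one_le_left (log_nonneg_of_mem (hS ha)) ?_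
      exact_mod_cast hf.one_le_divisor (convex_closedBall c R).isPreconnected
        (mem_closedBall_self hR.le) hfc (hS ha) (hfS a ha)
    _ ≤ ∑ u ∈ S ∪ hD_finite.toFinset, (D u : ℝ) * Real.log (R * ‖c - u‖⁻¹) :=
      Finset.sum_le_sum_of_subset_of_nonneg Finset.subset_union_left fun u _ _ => term_nonneg u
    _ = _ := by
      refine (finsum_eq_sum_of_support_subset _ fun u hu => ?_).symm
      exact Finset.mem_union_right _
        (hD_finite.mem_toFinset.mpr (Int.cast_ne_zero.mp (left_ne_zero_of_mul hu)))
  linarith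

theorem intervalIntegrable_indicator_Ici_inv {t : ℝ} (ht : 0 < t) (a b : ℝ) :
    IntervalIntegrable ((Ici t).indicator (·⁻¹)) volume a b := by
  rw [intervalIntegrable_iff, integrableOn_indicator_iff measurableSet_Ici]
  refine (ContinuousOn.integrableOn_Icc (a := t) (b := max a b) ?_).mono_set ?_
  · exact continuousOn_inv₀.mono fun s hs => (ht.trans_le hs.1).ne'
  · rintro s ⟨hts, hs⟩
    exact ⟨hts, hs.2⟩

theorem integral_indicator_Ici_inv_le_log {c t R : ℝ} (hcR : c ≤ R) (ht : 0 < t)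
    (htR : t ≤ R) :
    ∫ s in c..R, (Ici t).indicator (·⁻¹) s ≤ Real.log (R / t) := by
  rw [intervalIntegral.integral_of_le hcR, setIntegral_indicator measurableSet_Ici,
    ← integral_inv_of_pos ht (ht.trans_le htR), intervalIntegral.integral_of_le htR,
    ← integral_Icc_eq_integral_Ioc]
  refine setIntegral_mono_set ?_ ?_ ?_
  · exact (continuousOn_inv₀.mono fun s hs => (ht.trans_le hs.1).ne').integrableOn_Icc
  · filter_upwards [ae_restrict_mem measurableSet_Icc] with s hs
    exact inv_nonneg.mpr (ht.le.trans hs.1)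
  · exact Filter.Eventually.of_forall fun s hs => ⟨hs.2, hs.1.2⟩

theorem integral_le_sum_log_div {ι : Type*} {S : Finset ι} {r : ι → ℝ} {g : ℝ → ℝ} {c R : ℝ}
    (hcR : c ≤ R) (hr : ∀ i ∈ S, 0 < r i ∧ r i ≤ R) (hg : IntervalIntegrable g volume c R)
    (hgN : ∀ s ∈ Icc c R, g s ≤ #{i ∈ S | r i ≤ s} / s) :
    ∫ s in c..R, g s ≤ ∑ i ∈ S, Real.log (R / r i) := by
  have card_div_eq (s : ℝ) :
      (#{i ∈ S | r i ≤ s} : ℝ) / s = ∑ i ∈ S, (Ici (r i)).indicator (·⁻¹) s := by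
    simp only [indicator, Set.mem_Ici, ← Finset.sum_filter, Finset.sum_const, nsmul_eq_mul,
      div_eq_mul_inv]
  have integrable (i) (hi : i ∈ S) := intervalIntegrable_indicator_Ici_inv (hr i hi).1 c R
  calc ∫ s in c..R, g s
      ≤ ∫ s in c..R, ∑ i ∈ S, (Ici (r i)).indicator (·⁻¹) s :=
        intervalIntegral.integral_mono_on hcR hg
          (by simpa only [Finset.sum_fn] using IntervalIntegrable.sum S integrable)
          fun s hs => (hgN s hs).trans_eq (card_div_eq s)
    _ = ∑ i ∈ S, ∫ s in c..R, (Ici (r i)).indicator (·⁻¹) s :=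
        intervalIntegral.integral_finsetSum integrable
    _ ≤ ∑ i ∈ S, Real.log (R / r i) :=
        Finset.sum_le_sum fun i hi =>
          integral_indicator_Ici_inv_le_log hcR (hr i hi).1 (hr i hi).2

theorem finite_inter_closedBall_of_le_ncard {X : Type*} [PseudoMetricSpace X] {Γ : Set X}
    {x : X} {q C₀ : ℝ} (hq : 0 < q) (hC₀ : 0 < C₀)
    (hcount : ∀ r, C₀ ≤ r → q * r ^ 2 ≤ (Γ ∩ closedBall x r).ncard) (r : ℝ) :
    (Γ ∩ closedBall x r).Finite := by
  have hpos : (0 : ℝ) < (Γ ∩ closedBall x (max r C₀)).ncard :=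
    lt_of_lt_of_le (by positivity [hC₀.trans_le (le_max_right r C₀)])
      (hcount _ (le_max_right r C₀))
  exact (Set.finite_of_ncard_pos (by exact_mod_cast hpos)).subset
    (inter_subset_inter_right Γ (closedBall_subset_closedBall (le_max_left r C₀)))

theorem le_sum_log_div_norm_of_le_ncard {Γ : Set ℂ} {q C₀ R : ℝ} (hC₀ : 0 < C₀)
    (hR : C₀ ≤ R) (hΓ0 : (0 : ℂ) ∉ Γ) (hfin : (Γ ∩ closedBall 0 R).Finite)
    (hcount : ∀ r, C₀ ≤ r → q * r ^ 2 ≤ (Γ ∩ closedBall (0 : ℂ) r).ncard) :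
    q * ((R ^ 2 - C₀ ^ 2) / 2) ≤ ∑ a ∈ hfin.toFinset, Real.log (R / ‖a‖) := by
  rw [← integral_id, ← intervalIntegral.integral_const_mul]
  refine integral_le_sum_log_div hR (fun a ha => ?_)
    ((continuous_const_mul q).intervalIntegrable _ _) fun s hs => ?_
  · rw [Finite.mem_toFinset, mem_inter_iff, mem_closedBall_zero_iff] at ha
    exact ⟨norm_pos_iff.mpr (ne_of_mem_of_not_mem ha.1 hΓ0), ha.2⟩
  · have hs0 : 0 < s := hC₀.trans_le hs.1
    have card_eq : #{a ∈ hfin.toFinset | ‖a‖ ≤ s} = (Γ ∩ closedBall 0 s).ncard := by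
      rw [← Set.ncard_coe_finset]
      congr 1
      ext a
      simp only [coe_filter, Finite.mem_toFinset, mem_inter_iff, mem_closedBall_zero_iff,
        mem_ofPred_eq]
      exact ⟨fun h => ⟨h.1.1, h.2⟩, fun h => ⟨⟨h.1, h.2.trans hs.2⟩, h.2⟩⟩
    rw [card_eq, le_div_iff₀ hs0, mul_assoc, ← sq]
    exact hcount s hs.1

theorem stmt_11_general (q C C₀ : ℝ) (hq : 1/2 < q) (hC₀ : 0 < C₀)
    (F : ℂ → ℂ) (hF : Differentiable ℂ F) (hF0 : F 0 ≠ 0)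
    (hbd : ∀ z : ℂ, ‖F z‖ ≤ C * Real.exp (‖z‖ ^ 2 / 4))
    (Γ : Set ℂ) (hΓ0 : (0 : ℂ) ∉ Γ) (hvan : ∀ w ∈ Γ, F w = 0)
    (hcount : ∀ r : ℝ, C₀ ≤ r →
      q * r ^ 2 ≤ ((Γ ∩ Metric.closedBall (0:ℂ) r).ncard : ℝ)) :
    False := by
  have hfin := finite_inter_closedBall_of_le_ncard (by linarith) hC₀ hcount
  have key (R : ℝ) (hR : C₀ ≤ R) :
      Real.log ‖F 0‖ + q * ((R ^ 2 - C₀ ^ 2) / 2) ≤ Real.log (max C 1) + R ^ 2 / 4 := by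
    have hM : 1 ≤ max C 1 * Real.exp (R ^ 2 / 4) :=
      one_le_mul_of_one_le_of_one_le (le_max_right C 1) (one_le_exp (by positivity))
    have h_circle (z : ℂ) (hz : z ∈ sphere 0 R) : ‖F z‖ ≤ max C 1 * Real.exp (R ^ 2 / 4) := by
      rw [mem_sphere_zero_iff_norm] at hz
      refine (hbd z).trans ?_
      rw [hz]
      gcongr
      exact le_max_left C 1
    have jensen := AnalyticOnNhd.log_norm_add_sum_log_le (hC₀.trans_le hR)
      (fun z _ => hF.analyticAt z) hF0 hM h_circle (S := (hfin R).toFinset)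
      (fun a ha => ((hfin R).mem_toFinset.mp ha).2)
      (fun a ha => hvan a ((hfin R).mem_toFinset.mp ha).1)
    simp only [zero_sub, norm_neg] at jensen
    rw [Real.log_mul (by positivity) (by positivity), Real.log_exp] at jensen
    linarith [le_sum_log_div_norm_of_le_ncard hC₀ hR hΓ0 (hfin R) hcount]
  have hcoef : 0 < q / 2 - 1 / 4 := by linarith
  have h_growth := (tendsto_pow_atTop two_ne_zero).const_mul_atTop hcoef
  obtain ⟨R, hR_large, hR⟩ := (h_growth.eventually_gt_atTop
    (Real.log (max C 1) - Real.log ‖F 0‖ + q * C₀ ^ 2 / 2) |>.and (eventually_ge_atTop C₀)).exists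
  linarith [key R hR]

theorem stmt_11 (q C C₀ : ℝ) (hq : 1/2 < q) (hC : 0 < C) (hC₀ : 0 < C₀)
    (F : ℂ → ℂ) (hF : Differentiable ℂ F) (hF0 : F 0 ≠ 0)
    (hbd : ∀ z : ℂ, ‖F z‖ ≤ C * Real.exp (‖z‖ ^ 2 / 4))
    (Γ : Set ℂ) (hΓ0 : (0 : ℂ) ∉ Γ) (hvan : ∀ w ∈ Γ, F w = 0)
    (hcount : ∀ r : ℝ, C₀ ≤ r →
      q * r ^ 2 ≤ ((Γ ∩ Metric.closedBall (0:ℂ) r).ncard : ℝ)) :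
    False :=
  stmt_11_general q C C₀ hq hC₀ F hF hF0 hbd Γ hΓ0 hvan hcount
end

section
/- Fix ε > 0 and p ≥ 1. For R ≥ R₀(ε) sufficiently large, ∫_{|w|>R} |w|^{pR} · (R²/(e|w|²))^{pR²/4} dm₂(w) ≤ C(ε,p) R² · ∫_{|ζ|>1} (1/(e|ζ|²))^{pεR²/5} dm₂(ζ), and the right-hand side tends to 0 as R → ∞. -/
/-!
For `‖w‖ = t > R` the integrand equals `exp (p R log t + (p R² / 4) (2 log R - 1 - 2 log t))`,
and since `p R²/2 - p R ≥ 3` for `R ≥ 5` all but `t⁻³` of the (negative) power of `t` can be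
bounded using `t > R`. This dominates the integrand by
`8 R^(pR+3) e^(-pR²/4) (1 + ‖w‖)⁻³`, an integrable function on `ℂ` times a constant that tends
to `0`.
-/

open MeasureTheory Filter Topology Real

theorem tendsto_setIntegral_zero_of_norm_le_mul {α ι G : Type*} [MeasurableSpace α]
    [NormedAddCommGroup G] [NormedSpace ℝ G] {μ : Measure α} {l : Filter ι}
    {f : ι → α → G} {s : ι → Set α} {g : α → ℝ} {K : ι → ℝ}
    (hg : Integrable g μ) (hg0 : 0 ≤ g)
    (hle : ∀ᶠ i in l, ∀ᵐ x ∂μ.restrict (s i), ‖f i x‖ ≤ K i * g x)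
    (hK : Tendsto K l (𝓝 0)) :
    Tendsto (fun i => ∫ x in s i, f i x ∂μ) l (𝓝 0) := by
  rw [tendsto_zero_iff_norm_tendsto_zero]
  have hbound : Tendsto (fun i => |K i| * ∫ x, g x ∂μ) l (𝓝 0) := by
    simpa using hK.abs.mul_const (∫ x, g x ∂μ)
  refine squeeze_zero' (.of_forall fun _ => norm_nonneg _) ?_ hbound
  filter_upwards [hle] with i hi
  calc ‖∫ x in s i, f i x ∂μ‖ ≤ ∫ x in s i, K i * g x ∂μ :=
        norm_integral_le_of_norm_le (hg.integrableOn.const_mul _) hi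
    _ = K i * ∫ x in s i, g x ∂μ := integral_const_mul _ _
    _ ≤ |K i| * ∫ x, g x ∂μ :=
        mul_le_mul (le_abs_self _) (setIntegral_le_integral hg (.of_forall hg0))
          (integral_nonneg hg0) (abs_nonneg _)

theorem rpow_mul_sq_div_exp_rpow_eq {R t : ℝ} (hR : 0 < R) (ht : 0 < t) (a b : ℝ) :
    t ^ a * (R ^ 2 / (exp 1 * t ^ 2)) ^ b =
      exp (a * log t + b * (2 * log R - 1 - 2 * log t)) := by
  have hlog : log (R ^ 2 / (exp 1 * t ^ 2)) = 2 * log R - 1 - 2 * log t := by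
    rw [log_div (by positivity) (by positivity), log_mul (exp_ne_zero 1) (by positivity),
      log_exp, log_pow, log_pow]
    push_cast
    ring
  rw [rpow_def_of_pos ht, rpow_def_of_pos (by positivity), ← exp_add, hlog]
  ring_nf

theorem rpow_neg_three_le_eight_mul_one_add_rpow {t : ℝ} (ht : 1 ≤ t) :
    t ^ (-3 : ℝ) ≤ 8 * (1 + t) ^ (-3 : ℝ) := by
  have h : (2 * t) ^ (-3 : ℝ) ≤ (1 + t) ^ (-3 : ℝ) :=
    rpow_le_rpow_of_nonpos (by positivity) (by linarith) (by norm_num)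
  have h2 : (2 : ℝ) ^ (-3 : ℝ) = 1 / 8 := by rw [rpow_neg (by norm_num)]; norm_num
  rw [mul_rpow (by norm_num) (by positivity), h2] at h
  linarith

theorem rpow_mul_sq_div_exp_rpow_le {p R t : ℝ} (hp : 1 ≤ p) (hR : 5 ≤ R) (hRt : R < t) :
    t ^ (p * R) * (R ^ 2 / (exp 1 * t ^ 2)) ^ (p * R ^ 2 / 4) ≤
      8 * exp ((p * R + 3) * log R - p * R ^ 2 / 4) * (1 + t) ^ (-3 : ℝ) := by
  have hR0 : 0 < R := by linarith
  have ht0 : 0 < t := hR0.trans hRt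
  have hlog : log R ≤ log t := log_le_log hR0 hRt.le
  have hexcess : p * R - p * R ^ 2 / 2 + 3 ≤ 0 := by
    nlinarith [mul_le_mul_of_nonneg_right hp (show 0 ≤ R ^ 2 / 2 - R by nlinarith)]
  -- the difference of the two exponents is `(p R - p R²/2 + 3) (log t - log R)`
  have hexp : p * R * log t + p * R ^ 2 / 4 * (2 * log R - 1 - 2 * log t) ≤
      ((p * R + 3) * log R - p * R ^ 2 / 4) + -3 * log t := by
    nlinarith [mul_nonneg (neg_nonneg.2 hexcess) (sub_nonneg.2 hlog)]
  rw [rpow_mul_sq_div_exp_rpow_eq hR0 ht0]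
  calc _ ≤ exp (((p * R + 3) * log R - p * R ^ 2 / 4) + -3 * log t) := exp_le_exp.2 hexp
    _ = exp ((p * R + 3) * log R - p * R ^ 2 / 4) * t ^ (-3 : ℝ) := by
      rw [exp_add, rpow_def_of_pos ht0, mul_comm (log t)]
    _ ≤ exp ((p * R + 3) * log R - p * R ^ 2 / 4) * (8 * (1 + t) ^ (-3 : ℝ)) := by
      gcongr
      exact rpow_neg_three_le_eight_mul_one_add_rpow (by linarith)
    _ = _ := by ring

theorem tendsto_add_mul_log_sub_sq_atBot {p : ℝ} (hp : 0 < p) (b : ℝ) :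
    Tendsto (fun R => (p * R + b) * log R - p * R ^ 2 / 4) atTop atBot := by
  have hlog : ∀ᶠ R in atTop, log R ≤ R / 16 := by
    filter_upwards [isLittleO_log_id_atTop.bound (show (0 : ℝ) < 1 / 16 by norm_num),
      eventually_ge_atTop 1] with R hR h1
    rw [norm_of_nonneg (log_nonneg h1), id, norm_of_nonneg (by linarith)] at hR
    linarith
  refine tendsto_atBot_mono' atTop ?_ (tendsto_neg_atTop_atBot.comp
    ((tendsto_pow_atTop two_ne_zero).const_mul_atTop (show 0 < p / 8 by positivity)))
  filter_upwards [hlog, eventually_ge_atTop 1, eventually_ge_atTop (b / p)] with R hRlog h1 hb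
  have hb' : b ≤ p * R := by rwa [div_le_iff₀' hp] at hb
  have hlinear : (p * R + b) * log R ≤ (2 * p * R) * (R / 16) :=
    calc (p * R + b) * log R ≤ (2 * p * R) * log R :=
        mul_le_mul_of_nonneg_right (by linarith) (log_nonneg h1)
      _ ≤ (2 * p * R) * (R / 16) := by gcongr
  simp only [Function.comp]
  nlinarith

theorem stmt_15 (p : ℝ) (hp : 1 ≤ p) :
    Filter.Tendsto (fun R : ℝ =>
      ∫ w in {w : ℂ | R < ‖w‖},
        ‖w‖ ^ (p * R) * (R ^ 2 / (Real.exp 1 * ‖w‖ ^ 2)) ^ (p * R ^ 2 / 4))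
      Filter.atTop (nhds 0) := by
  have hg : Integrable (fun w : ℂ => (1 + ‖w‖) ^ (-3 : ℝ)) :=
    integrable_one_add_norm (by simp [Complex.finrank_real_complex]; norm_num)
  have hK : Tendsto (fun R => 8 * exp ((p * R + 3) * log R - p * R ^ 2 / 4)) atTop (𝓝 0) := by
    simpa using
      (tendsto_exp_atBot.comp (tendsto_add_mul_log_sub_sq_atBot (by linarith) 3)).const_mul 8
  refine tendsto_setIntegral_zero_of_norm_le_mul hg (fun w => by positivity) ?_ hK
  filter_upwards [eventually_ge_atTop 5] with R hR
  refine ae_restrict_of_forall_mem (measurableSet_lt measurable_const measurable_norm)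
    fun w hw => ?_
  rw [norm_of_nonneg (by positivity)]
  exact rpow_mul_sq_div_exp_rpow_le hp hR hw
end

section
/- Let X be a Banach space, M : X → X a bounded linear operator, and E₁, E₂ closed M-invariant subspaces with dim(E_i / clos(M E_i)) = 1 for i = 1,2. Then the smallest closed M-invariant subspace E₁ ∨ E₂ containing E₁ and E₂ satisfies dim((E₁∨E₂)/clos(M(E₁∨E₂))) ≤ 2. -/
open Submodule Cardinal

/-- A closed submodule plus a finite-dimensional span is closed. -/
lemma isClosed_sup_span_aux {X : Type*} [NormedAddCommGroup X] [NormedSpace ℂ X]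
    (F : Submodule ℂ X) (hF : IsClosed (F : Set X)) (s : Set X) (hs : s.Finite) :
    IsClosed ((F ⊔ Submodule.span ℂ s : Submodule ℂ X) : Set X) := by
  haveI : IsClosed (F : Set X) := hF
  have hmkQcont : Continuous F.mkQ :=
    (LinearMap.mkContinuous F.mkQ 1 (fun x => by
      simpa using Submodule.Quotient.norm_mk_le F x)).continuous
  haveI : FiniteDimensional ℂ (Submodule.span ℂ s) := FiniteDimensional.span_of_finite ℂ hs
  have heq : (F ⊔ Submodule.span ℂ s : Submodule ℂ X)
      = Submodule.comap F.mkQ (Submodule.map F.mkQ (Submodule.span ℂ s)) := by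
    rw [Submodule.comap_map_mkQ]
  rw [heq]
  have hclosed : IsClosed ((Submodule.map F.mkQ (Submodule.span ℂ s)) : Set (X ⧸ F)) :=
    Submodule.closed_of_finiteDimensional _
  exact hclosed.preimage hmkQcont

theorem stmt_18 {X : Type*} [NormedAddCommGroup X] [NormedSpace ℂ X] [CompleteSpace X]
    (M : X →L[ℂ] X) (E₁ E₂ : Submodule ℂ X)
    (hc₁ : IsClosed (E₁ : Set X)) (hc₂ : IsClosed (E₂ : Set X))
    (hi₁ : ∀ x ∈ E₁, M x ∈ E₁) (hi₂ : ∀ x ∈ E₂, M x ∈ E₂)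
    (hind₁ : Module.rank ℂ
      (E₁ ⧸ ((Submodule.map (M : X →ₗ[ℂ] X) E₁).topologicalClosure.comap E₁.subtype)) = 1)
    (hind₂ : Module.rank ℂ
      (E₂ ⧸ ((Submodule.map (M : X →ₗ[ℂ] X) E₂).topologicalClosure.comap E₂.subtype)) = 1) :
    Module.rank ℂ
      ((E₁ ⊔ E₂).topologicalClosure ⧸
        ((Submodule.map (M : X →ₗ[ℂ] X) (E₁ ⊔ E₂).topologicalClosure).topologicalClosure.comap
          ((E₁ ⊔ E₂).topologicalClosure).subtype)) ≤ 2 := by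
  classical
  -- Step 1: from index one, get a generator for each Eᵢ modulo the closure of M Eᵢ.
  have key : ∀ (E' : Submodule ℂ X),
      Module.rank ℂ
        (E' ⧸ ((Submodule.map (M : X →ₗ[ℂ] X) E').topologicalClosure.comap E'.subtype)) = 1 →
      ∃ v ∈ E', ∀ x ∈ E', ∃ c : ℂ,
        x - c • v ∈ (Submodule.map (M : X →ₗ[ℂ] X) E').topologicalClosure := by
    intro E' h
    set G := (Submodule.map (M : X →ₗ[ℂ] X) E').topologicalClosure.comap E'.subtype with hG
    have hfr : Module.finrank ℂ (E' ⧸ G) = 1 := Module.rank_eq_one_iff_finrank_eq_one.mp h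
    obtain ⟨v, _hv0, hv⟩ := finrank_eq_one_iff'.mp hfr
    obtain ⟨w, rfl⟩ := G.mkQ_surjective v
    refine ⟨(w : X), w.2, ?_⟩
    intro x hx
    obtain ⟨c, hc⟩ := hv (G.mkQ ⟨x, hx⟩)
    refine ⟨c, ?_⟩
    have hmem : (⟨x, hx⟩ - c • w : E') ∈ G := by
      rw [← Submodule.Quotient.mk_eq_zero]
      have : G.mkQ (⟨x, hx⟩ - c • w) = G.mkQ ⟨x, hx⟩ - c • G.mkQ w := by
        simp [map_sub, map_smul]
      rw [show Submodule.Quotient.mk (⟨x, hx⟩ - c • w : E') = G.mkQ (⟨x, hx⟩ - c • w) from rfl,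
        this, ← hc]
      abel
    have := hmem
    rw [hG, Submodule.mem_comap] at this
    simpa using this
  obtain ⟨v₁, hv₁E, hv₁⟩ := key E₁ hind₁
  obtain ⟨v₂, hv₂E, hv₂⟩ := key E₂ hind₂
  set E := (E₁ ⊔ E₂).topologicalClosure with hEdef
  set F := (Submodule.map (M : X →ₗ[ℂ] X) E).topologicalClosure with hFdef
  have hE₁E : E₁ ≤ E := le_trans le_sup_left (Submodule.le_topologicalClosure _)
  have hE₂E : E₂ ≤ E := le_trans le_sup_right (Submodule.le_topologicalClosure _)
  have hFc₁ : (Submodule.map (M : X →ₗ[ℂ] X) E₁).topologicalClosure ≤ F :=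
    Submodule.topologicalClosure_mono (Submodule.map_mono hE₁E)
  have hFc₂ : (Submodule.map (M : X →ₗ[ℂ] X) E₂).topologicalClosure ≤ F :=
    Submodule.topologicalClosure_mono (Submodule.map_mono hE₂E)
  have hFclosed : IsClosed (F : Set X) := Submodule.isClosed_topologicalClosure _
  set S : Submodule ℂ X := F ⊔ Submodule.span ℂ {v₁, v₂} with hSdef
  have hSclosed : IsClosed (S : Set X) :=
    isClosed_sup_span_aux F hFclosed _ (Set.toFinite _)
  -- E₁ ⊔ E₂ ≤ S
  have hsub : E₁ ⊔ E₂ ≤ S := by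
    refine sup_le ?_ ?_
    · intro x hx
      obtain ⟨c, hc⟩ := hv₁ x hx
      have h1 : x - c • v₁ ∈ S := le_trans hFc₁ le_sup_left hc
      have h2 : c • v₁ ∈ S :=
        Submodule.smul_mem _ _ (le_sup_right (α := Submodule ℂ X)
          (Submodule.subset_span (by simp)))
      simpa using Submodule.add_mem _ h1 h2
    · intro x hx
      obtain ⟨c, hc⟩ := hv₂ x hx
      have h1 : x - c • v₂ ∈ S := le_trans hFc₂ le_sup_left hc
      have h2 : c • v₂ ∈ S :=
        Submodule.smul_mem _ _ (le_sup_right (α := Submodule ℂ X)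
          (Submodule.subset_span (by simp)))
      simpa using Submodule.add_mem _ h1 h2
  have hES : E ≤ S := Submodule.topologicalClosure_minimal _ hsub hSclosed
  -- Quotient
  set K : Submodule ℂ E := F.comap E.subtype with hKdef
  set q₁ : E ⧸ K := K.mkQ ⟨v₁, hE₁E hv₁E⟩ with hq₁
  set q₂ : E ⧸ K := K.mkQ ⟨v₂, hE₂E hv₂E⟩ with hq₂
  have htop : (⊤ : Submodule ℂ (E ⧸ K)) ≤ Submodule.span ℂ {q₁, q₂} := by
    intro q _
    obtain ⟨e, rfl⟩ := K.mkQ_surjective q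
    have he : (e : X) ∈ S := hES e.2
    rw [hSdef, Submodule.mem_sup] at he
    obtain ⟨f, hf, a, ha, hsum⟩ := he
    obtain ⟨c, d, hcd⟩ := Submodule.mem_span_pair.mp ha
    have hdiff : (e - (c • ⟨v₁, hE₁E hv₁E⟩ + d • ⟨v₂, hE₂E hv₂E⟩) : E) ∈ K := by
      rw [hKdef, Submodule.mem_comap]
      have : (E.subtype) (e - (c • ⟨v₁, hE₁E hv₁E⟩ + d • ⟨v₂, hE₂E hv₂E⟩)) = f := by
        simp only [map_sub, map_add, map_smul, Submodule.subtype_apply]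
        rw [hcd, ← hsum]; abel
      rw [this]; exact hf
    have hmk : K.mkQ e = c • q₁ + d • q₂ := by
      have h0 : K.mkQ (e - (c • ⟨v₁, hE₁E hv₁E⟩ + d • ⟨v₂, hE₂E hv₂E⟩)) = 0 :=
        (Submodule.Quotient.mk_eq_zero K).mpr hdiff
      rw [map_sub, map_add, map_smul, map_smul, sub_eq_zero] at h0
      exact h0
    rw [hmk]
    exact Submodule.add_mem _
      (Submodule.smul_mem _ _ (Submodule.subset_span (by simp)))
      (Submodule.smul_mem _ _ (Submodule.subset_span (by simp)))
  have htop' : Submodule.span ℂ ({q₁, q₂} : Set (E ⧸ K)) = ⊤ := top_le_iff.mp htop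
  calc Module.rank ℂ (E ⧸ K)
      = Module.rank ℂ (⊤ : Submodule ℂ (E ⧸ K)) := (rank_top ℂ _).symm
    _ = Module.rank ℂ (Submodule.span ℂ ({q₁, q₂} : Set (E ⧸ K))) := by rw [htop']
    _ ≤ #({q₁, q₂} : Set (E ⧸ K)) := rank_span_le _
    _ ≤ 2 := by
        have h1 : #({q₁, q₂} : Set (E ⧸ K)) ≤ #({q₂} : Set (E ⧸ K)) + 1 :=
          Cardinal.mk_insert_le
        simpa [Cardinal.mk_singleton, one_add_one_eq_two] using h1
end
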